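/- For all 0 ≤ s < t, the symmetrized Kullback–Leibler (Jeffreys) divergence between consecutive tempering measures admits the upper bound D_{KL,2}(μ_s, μ_t) ≤ (t−s)·⟨Φ⟩_s. -/

import Mathlib

/-!
Both tempering measures are exponential tilts of `μ₀`, so
`log (dμ_s/dμ_t) = (t - s) Φ + log (N_t / N_s)` almost everywhere. In the Jeffreys sum the
normalizing constants cancel, leaving `(t - s) (⟨Φ⟩_s - ⟨Φ⟩_t)`, which is at
most `(t - s) ⟨Φ⟩_s` since `Φ ≥ 0`.
-/

open MeasureTheory Real

/-- The tempering measure `μ_t`, defined by `dμ_t/dμ₀ = N_t⁻¹ exp (-t Φ)` where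
`N_t = ∫ exp (-t Φ) dμ₀` is the normalizing constant. -/
noncomputable def temper {H : Type*} [MeasurableSpace H]
    (μ₀ : Measure H) (Φ : H → ℝ) (t : ℝ) : Measure H :=
  μ₀.withDensity fun u =>
    ENNReal.ofReal ((∫ v, Real.exp (-t * Φ v) ∂μ₀)⁻¹ * Real.exp (-t * Φ u))

/-- The Kullback–Leibler divergence `D_KL(ν ‖ μ) = ∫ log (dν/dμ) dν` of two
(equivalent) probability measures. -/
noncomputable def klDivR {H : Type*} [MeasurableSpace H] (ν μ : Measure H) : ℝ :=
  ∫ u, Real.log ((ν.rnDeriv μ u).toReal) ∂ν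

/-- The symmetrized Kullback–Leibler (Jeffreys) divergence
`D_{KL,2}(μ, ν) = D_KL(ν ‖ μ) + D_KL(μ ‖ ν)`. -/
noncomputable def klDiv2R {H : Type*} [MeasurableSpace H] (μ ν : Measure H) : ℝ :=
  klDivR ν μ + klDivR μ ν

namespace MeasureTheory

variable {α : Type*} [MeasurableSpace α] {μ : Measure α} {f g : α → ℝ}

lemma llr_tilted_tilted [SigmaFinite μ] (hf : Integrable (fun x ↦ exp (f x)) μ)
    (hg : Integrable (fun x ↦ exp (g x)) μ) :
    llr (μ.tilted f) (μ.tilted g) =ᵐ[μ.tilted f] fun x ↦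
      f x - g x - log (∫ z, exp (f z) ∂μ) + log (∫ z, exp (g z) ∂μ) := by
  have hf_meas : AEMeasurable f μ := aemeasurable_of_aemeasurable_exp hf.1.aemeasurable
  have hac : μ.tilted f ≪ μ := tilted_absolutelyContinuous μ f
  filter_upwards [llr_tilted_right hac hg,
    hac.ae_le (llr_tilted_left Measure.AbsolutelyContinuous.rfl hf hf_meas),
    hac.ae_le (llr_self μ)] with x hright hleft hself
  rw [hright, hleft, hself, Pi.zero_apply]
  ring

lemma klDivR_tilted [SigmaFinite μ] [NeZero μ] (hf : Integrable (fun x ↦ exp (f x)) μ)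
    (hg : Integrable (fun x ↦ exp (g x)) μ) (hfg : Integrable (fun x ↦ f x - g x) (μ.tilted f)) :
    klDivR (μ.tilted f) (μ.tilted g) =
      ∫ x, f x - g x ∂(μ.tilted f) - log (∫ z, exp (f z) ∂μ) + log (∫ z, exp (g z) ∂μ) := by
  have := isProbabilityMeasure_tilted hf
  rw [klDivR, ← llr_def, integral_congr_ae (llr_tilted_tilted hf hg),
    integral_add (by fun_prop) (integrable_const _), integral_sub hfg (integrable_const _)]
  simp

lemma klDiv2R_tilted [SigmaFinite μ] [NeZero μ] (hf : Integrable (fun x ↦ exp (f x)) μ)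
    (hg : Integrable (fun x ↦ exp (g x)) μ) (hfg : Integrable (fun x ↦ f x - g x) (μ.tilted f))
    (hgf : Integrable (fun x ↦ g x - f x) (μ.tilted g)) :
    klDiv2R (μ.tilted f) (μ.tilted g) =
      ∫ x, f x - g x ∂(μ.tilted f) + ∫ x, g x - f x ∂(μ.tilted g) := by
  rw [klDiv2R, klDivR_tilted hf hg hfg, klDivR_tilted hg hf hgf]
  ring

end MeasureTheory

section Tempering

variable {H : Type*} [MeasurableSpace H] {μ₀ : Measure H} {Φ : H → ℝ}

lemma temper_eq_tilted (μ₀ : Measure H) (Φ : H → ℝ) (t : ℝ) :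
    temper μ₀ Φ t = μ₀.tilted fun u ↦ -t * Φ u := by
  simp only [temper, Measure.tilted, div_eq_inv_mul]

lemma norm_exp_neg_mul_le_one (hΦ : ∀ᵐ u ∂μ₀, 0 ≤ Φ u) {t : ℝ} (ht : 0 ≤ t) :
    ∀ᵐ u ∂μ₀, ‖exp (-t * Φ u)‖ ≤ 1 := by
  filter_upwards [hΦ] with u hu
  rw [norm_of_nonneg (exp_nonneg _), exp_le_one_iff]
  nlinarith

lemma integrable_exp_neg_mul [IsFiniteMeasure μ₀] (hΦ : AEMeasurable Φ μ₀)
    (hΦ_nonneg : ∀ᵐ u ∂μ₀, 0 ≤ Φ u) {t : ℝ} (ht : 0 ≤ t) :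
    Integrable (fun u ↦ exp (-t * Φ u)) μ₀ :=
  .of_bound (by fun_prop) 1 (norm_exp_neg_mul_le_one hΦ_nonneg ht)

lemma integrable_temper [IsFiniteMeasure μ₀] (hΦ : AEMeasurable Φ μ₀)
    (hΦ_nonneg : ∀ᵐ u ∂μ₀, 0 ≤ Φ u) {t : ℝ} (ht : 0 ≤ t) {g : H → ℝ} (hg : Integrable g μ₀) :
    Integrable g (temper μ₀ Φ t) := by
  rw [temper_eq_tilted, integrable_tilted_iff (integrable_exp_neg_mul hΦ hΦ_nonneg ht)]
  exact hg.bdd_mul (by fun_prop) (norm_exp_neg_mul_le_one hΦ_nonneg ht)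

lemma klDiv2R_temper [IsFiniteMeasure μ₀] [NeZero μ₀] (hΦ : Integrable Φ μ₀)
    (hΦ_nonneg : ∀ᵐ u ∂μ₀, 0 ≤ Φ u) {s t : ℝ} (hs : 0 ≤ s) (ht : 0 ≤ t) :
    klDiv2R (temper μ₀ Φ s) (temper μ₀ Φ t) =
      (t - s) * (∫ u, Φ u ∂(temper μ₀ Φ s) - ∫ u, Φ u ∂(temper μ₀ Φ t)) := by
  have hΦ_meas := hΦ.aemeasurable
  have h_diff (a b : ℝ) : (fun u ↦ -a * Φ u - -b * Φ u) = fun u ↦ (b - a) * Φ u := by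
    ext u; ring
  have h_int {a : ℝ} (ha : 0 ≤ a) (c : ℝ) : Integrable (fun u ↦ c * Φ u) (temper μ₀ Φ a) :=
    (integrable_temper hΦ_meas hΦ_nonneg ha hΦ).const_mul c
  simp only [temper_eq_tilted] at h_int ⊢
  rw [klDiv2R_tilted (integrable_exp_neg_mul hΦ_meas hΦ_nonneg hs)
    (integrable_exp_neg_mul hΦ_meas hΦ_nonneg ht) (h_diff s t ▸ h_int hs _)
    (h_diff t s ▸ h_int ht _), h_diff, h_diff, integral_const_mul, integral_const_mul]
  ring

end Tempering

theorem tempering_jeffreys_divergence_upper_bound_general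
    {H : Type*} [MeasurableSpace H]
    (μ₀ : Measure H) [IsProbabilityMeasure μ₀]
    (Φ : H → ℝ) (hΦnonneg : ∀ u, 0 ≤ Φ u)
    (hΦsq : MemLp Φ 2 μ₀)
    (s t : ℝ) (hs : 0 ≤ s) (hst : s < t) :
    klDiv2R (temper μ₀ Φ s) (temper μ₀ Φ t) ≤
      (t - s) * ∫ u, Φ u ∂(temper μ₀ Φ s) := by
  rw [klDiv2R_temper (hΦsq.integrable one_le_two) (ae_of_all _ hΦnonneg) hs (hs.trans hst.le)]
  exact mul_le_mul_of_nonneg_left (sub_le_self _ (integral_nonneg hΦnonneg)) (sub_nonneg.2 hst.le)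

/-- Let `H` be a real separable Hilbert space with its Borel σ-algebra,
`μ₀` a Borel probability measure on `H`, and `Φ : H → ℝ` measurable, nonnegative and
square-integrable w.r.t. `μ₀`.  For all `0 ≤ s < t`, the symmetrized Kullback–Leibler
(Jeffreys) divergence between consecutive tempering measures admits the upper bound
`D_{KL,2}(μ_s, μ_t) ≤ (t − s)·⟨Φ⟩_s`. -/
theorem tempering_jeffreys_divergence_upper_bound
    {H : Type*} [NormedAddCommGroup H] [InnerProductSpace ℝ H] [CompleteSpace H]
    [TopologicalSpace.SeparableSpace H] [MeasurableSpace H] [BorelSpace H]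
    (μ₀ : Measure H) [IsProbabilityMeasure μ₀]
    (Φ : H → ℝ) (hΦmeas : Measurable Φ) (hΦnonneg : ∀ u, 0 ≤ Φ u)
    (hΦsq : MemLp Φ 2 μ₀)
    (s t : ℝ) (hs : 0 ≤ s) (hst : s < t) :
    klDiv2R (temper μ₀ Φ s) (temper μ₀ Φ t) ≤
      (t - s) * ∫ u, Φ u ∂(temper μ₀ Φ s) :=
  tempering_jeffreys_divergence_upper_bound_general μ₀ Φ hΦnonneg hΦsq s t hs hst
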